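/- For all q, ψ ∈ ℝ^{N²}, ψᵀ( D_x(q ∗ D_y ψ) − D_y(q ∗ D_x ψ) ) = 0. In particular the semi-discretization J_E preserves the discrete energy. -/
import Mathlib

open Matrix
open scoped Kronecker

noncomputable section

/-- The `N×N` cyclic shift matrix: `E i j = 1` iff `j ≡ i+1 (mod N)`. -/
def shiftE (N : ℕ) : Matrix (Fin N) (Fin N) ℝ :=
  Matrix.of fun i j => if ((i : ℕ) + 1) % N = (j : ℕ) then 1 else 0

/-- The grid spacing `δ = 2π/N`. -/
def gridDelta (N : ℕ) : ℝ := 2 * Real.pi / N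

/-- The central divided-difference matrix `D = (E - Eᵀ)/(2δ)`. -/
def Dmat (N : ℕ) : Matrix (Fin N) (Fin N) ℝ :=
  (2 * gridDelta N)⁻¹ • (shiftE N - (shiftE N)ᵀ)

/-- `D_x = I ⊗ D`. -/
def Dx (N : ℕ) : Matrix (Fin N × Fin N) (Fin N × Fin N) ℝ :=
  (1 : Matrix (Fin N) (Fin N) ℝ) ⊗ₖ Dmat N

/-- `D_y = D ⊗ I`. -/
def Dy (N : ℕ) : Matrix (Fin N × Fin N) (Fin N × Fin N) ℝ :=
  Dmat N ⊗ₖ (1 : Matrix (Fin N) (Fin N) ℝ)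

lemma Dmat_transpose (N : ℕ) : (Dmat N)ᵀ = -(Dmat N) := by
  simp [Dmat, transpose_smul, transpose_sub, smul_sub]

lemma Dmat_apply_anti (N : ℕ) (a b : Fin N) : Dmat N a b = -(Dmat N b a) := by
  have := congrFun (congrFun (Dmat_transpose N) b) a
  simpa using this

lemma Dx_transpose (N : ℕ) : (Dx N)ᵀ = -(Dx N) := by
  ext ⟨i,j⟩ ⟨k,l⟩
  simp only [Dx, transpose_apply, kroneckerMap_apply, Matrix.neg_apply]
  rw [Dmat_apply_anti]
  by_cases hik : i = k <;> simp [Matrix.one_apply, hik, eq_comm]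

lemma Dy_transpose (N : ℕ) : (Dy N)ᵀ = -(Dy N) := by
  ext ⟨i,j⟩ ⟨k,l⟩
  simp only [Dy, transpose_apply, kroneckerMap_apply, Matrix.neg_apply]
  rw [Dmat_apply_anti]
  by_cases hjl : j = l <;> simp [Matrix.one_apply, hjl, eq_comm]

/-- `ψᵀ( D_x(q ∗ D_y ψ) − D_y(q ∗ D_x ψ) ) = 0`, so the `J_E`
semi-discretization preserves the discrete energy. -/
theorem JE_energy_orthogonal (N : ℕ) (hN : 3 ≤ N)
    (q ψ : Fin N × Fin N → ℝ) :
    ψ ⬝ᵥ ((Dx N).mulVec (q * (Dy N).mulVec ψ) - (Dy N).mulVec (q * (Dx N).mulVec ψ))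
      = 0 := by
  rw [dotProduct_sub, dotProduct_mulVec, dotProduct_mulVec,
    ← Matrix.mulVec_transpose, ← Matrix.mulVec_transpose, Dx_transpose, Dy_transpose]
  simp only [Matrix.neg_mulVec, neg_dotProduct, dotProduct, Pi.neg_apply, Pi.mul_apply]
  rw [sub_eq_zero]
  apply Finset.sum_congr rfl
  intro i _
  ring
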